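/- Let D = {q ∈ ℂ : 0 < |q| < 1}, and for q ∈ D set L(q) = log(1/|q|), C(q) = (1/(4q)) ( π²/L(q)² − 1 ), and ρ(q) = i π³ / (2 |q|² L(q)³). Then C is real-differentiable on D (viewing ℂ as ℝ² with q = u + iv), its Wirtinger derivative satisfies ∂̄C(q) = ½(∂C/∂u + i ∂C/∂v)(q) = π² / (4 |q|² L(q)³) for all q ∈ D, and consequently the Poisson bracket of q and C(q) with respect to the two-form ω = ρ(q) dq ∧ dq̄, namely {q, C} := ρ(q)⁻¹ · ∂̄C(q), equals 1/(2πi) at every point of D. -/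

import Mathlib

open Real

/-- The antiholomorphic Wirtinger derivative `∂̄f = ½(∂f/∂u + i ∂f/∂v)` of a
function `f : ℂ → ℂ`, viewed via the real Fréchet derivative. -/
noncomputable def wirtingerBar (f : ℂ → ℂ) (q : ℂ) : ℂ :=
  (1 / 2) * (fderiv ℝ f q 1 + Complex.I * fderiv ℝ f q Complex.I)

/-- `L(q) = log(1/|q|)`. -/
noncomputable def Lmod (q : ℂ) : ℝ := Real.log (1 / ‖q‖)

/-- The accessory parameter `C(q) = (1/(4q))(π²/L(q)² − 1)`. -/
noncomputable def accC (q : ℂ) : ℂ :=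
  (1 / (4 * q)) * (((π : ℂ) ^ 2 / (Lmod q : ℂ) ^ 2) - 1)

/-- The density `ρ(q) = i π³ / (2 |q|² L(q)³)` of the Weil–Petersson form
`ω = ρ(q) dq ∧ dq̄`. -/
noncomputable def wpDensity (q : ℂ) : ℂ :=
  Complex.I * (π : ℂ) ^ 3 / (2 * (‖q‖ : ℂ) ^ 2 * (Lmod q : ℂ) ^ 3)

/-! Writing `L(q) = -½ log |q|²`, the accessory parameter is `C(q) = φ(|q|²) / (4q)` with
`φ(t) = π² / (-½ log t)² - 1` (`accProfile`). The factor `1/(4q)` is holomorphic, so `∂̄` only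
sees `φ(|q|²)`; the chain rule and `∂̄|q|² = q` give `∂̄C = φ'(|q|²) / 4 = π² / (4 |q|² L³)`,
and dividing by `ρ = i π³ / (2 |q|² L³)` leaves `1 / (2πi)`. -/

theorem wirtingerBar_ofReal_of_hasFDerivAt {h : ℂ → ℝ} {h' : ℂ →L[ℝ] ℝ} {q : ℂ}
    (hh : HasFDerivAt h h' q) :
    wirtingerBar (fun z => (h z : ℂ)) q = (1 / 2) * (h' 1 + Complex.I * h' Complex.I) := by
  have H : HasFDerivAt (fun z => (h z : ℂ)) (Complex.ofRealCLM.comp h') q :=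
    Complex.ofRealCLM.hasFDerivAt.comp q hh
  rw [wirtingerBar, H.fderiv]
  rfl

theorem wirtingerBar_ofReal_comp {φ : ℝ → ℝ} {φ' : ℝ} {h : ℂ → ℝ} {q : ℂ}
    (hφ : HasDerivAt φ φ' (h q)) (hh : DifferentiableAt ℝ h q) :
    wirtingerBar (fun z => (φ (h z) : ℂ)) q = φ' * wirtingerBar (fun z => (h z : ℂ)) q := by
  have H : HasFDerivAt (fun z => φ (h z)) (φ' • fderiv ℝ h q) q :=
    hφ.comp_hasFDerivAt q hh.hasFDerivAt
  rw [wirtingerBar_ofReal_of_hasFDerivAt H,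
    wirtingerBar_ofReal_of_hasFDerivAt hh.hasFDerivAt]
  simp only [smul_apply, smul_eq_mul, Complex.ofReal_mul]
  ring

theorem wirtingerBar_norm_sq (q : ℂ) : wirtingerBar (fun z => ((‖z‖ ^ 2 : ℝ) : ℂ)) q = q := by
  rw [wirtingerBar_ofReal_of_hasFDerivAt (hasStrictFDerivAt_norm_sq q).hasFDerivAt]
  apply Complex.ext <;> simp [Complex.inner]

theorem wirtingerBar_mul {f g : ℂ → ℂ} {q : ℂ} (hf : DifferentiableAt ℝ f q)
    (hg : DifferentiableAt ℝ g q) :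
    wirtingerBar (fun z => f z * g z) q = wirtingerBar f q * g q + f q * wirtingerBar g q := by
  simp only [wirtingerBar, ← Pi.mul_def, fderiv_mul hf hg, add_apply,
    smul_apply, smul_eq_mul]
  ring

theorem wirtingerBar_eq_zero_of_differentiableAt {f : ℂ → ℂ} {q : ℂ}
    (hf : DifferentiableAt ℂ f q) : wirtingerBar f q = 0 := by
  have hI : fderiv ℂ f q Complex.I = Complex.I * fderiv ℂ f q 1 := by
    rw [← smul_eq_mul, ← map_smul, smul_eq_mul, mul_one]
  rw [wirtingerBar, hf.fderiv_restrictScalars ℝ]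
  simp only [ContinuousLinearMap.coe_restrictScalars', hI, ← mul_assoc, Complex.I_mul_I]
  ring

theorem Lmod_eq_neg_half_log_norm_sq (q : ℂ) : Lmod q = -(1 / 2) * log (‖q‖ ^ 2) := by
  rw [Lmod, one_div, Real.log_inv, Real.log_pow]
  ring

noncomputable def accProfile (t : ℝ) : ℝ := π ^ 2 / (-(1 / 2) * log t) ^ 2 - 1

theorem accC_eq_accProfile : accC = fun z => 1 / (4 * z) * (accProfile (‖z‖ ^ 2) : ℂ) := by
  funext z
  rw [accC, accProfile, Lmod_eq_neg_half_log_norm_sq]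
  push_cast
  rfl

theorem hasDerivAt_accProfile {t : ℝ} (ht : t ≠ 0) (hlog : log t ≠ 0) :
    HasDerivAt accProfile (π ^ 2 / (t * (-(1 / 2) * log t) ^ 3)) t := by
  have := ((hasDerivAt_const t (π ^ 2)).fun_div
    (((Real.hasDerivAt_log ht).const_mul (-(1 / 2))).fun_pow 2) (by positivity)).sub_const 1
  refine this.congr_deriv ?_
  field_simp
  ring

theorem hasDerivAt_accProfile_norm_sq {q : ℂ} (hq : q ≠ 0) (hL : Lmod q ≠ 0) :
    HasDerivAt accProfile (π ^ 2 / (‖q‖ ^ 2 * Lmod q ^ 3)) (‖q‖ ^ 2) := by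
  rw [Lmod_eq_neg_half_log_norm_sq] at hL ⊢
  exact hasDerivAt_accProfile (by positivity) (by contrapose! hL; simp [hL])

theorem differentiableAt_ofReal_accProfile_norm_sq {q : ℂ} (hq : q ≠ 0) (hL : Lmod q ≠ 0) :
    DifferentiableAt ℝ (fun z : ℂ => (accProfile (‖z‖ ^ 2) : ℂ)) q := by
  have h := (hasDerivAt_accProfile_norm_sq hq hL).differentiableAt.comp q
    (hasStrictFDerivAt_norm_sq q).differentiableAt
  exact Complex.ofRealCLM.differentiableAt.comp q h

theorem wirtingerBar_ofReal_accProfile_norm_sq {q : ℂ} (hq : q ≠ 0) (hL : Lmod q ≠ 0) :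
    wirtingerBar (fun z : ℂ => (accProfile (‖z‖ ^ 2) : ℂ)) q =
      (π ^ 2 / (‖q‖ ^ 2 * Lmod q ^ 3) : ℝ) * q := by
  rw [wirtingerBar_ofReal_comp (hasDerivAt_accProfile_norm_sq hq hL)
    (hasStrictFDerivAt_norm_sq q).differentiableAt, wirtingerBar_norm_sq]

theorem differentiableAt_one_div_four_mul {q : ℂ} (hq : q ≠ 0) :
    DifferentiableAt ℂ (fun z : ℂ => 1 / (4 * z)) q := by
  fun_prop (disch := simpa)

theorem differentiableAt_accC {q : ℂ} (hq : q ≠ 0) (hL : Lmod q ≠ 0) :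
    DifferentiableAt ℝ accC q := by
  rw [accC_eq_accProfile]
  exact ((differentiableAt_one_div_four_mul hq).restrictScalars ℝ).mul
    (differentiableAt_ofReal_accProfile_norm_sq hq hL)

theorem wirtingerBar_accC {q : ℂ} (hq : q ≠ 0) (hL : Lmod q ≠ 0) :
    wirtingerBar accC q = ((π ^ 2 / (4 * ‖q‖ ^ 2 * Lmod q ^ 3) : ℝ) : ℂ) := by
  rw [accC_eq_accProfile,
    wirtingerBar_mul ((differentiableAt_one_div_four_mul hq).restrictScalars ℝ)
      (differentiableAt_ofReal_accProfile_norm_sq hq hL),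
    wirtingerBar_eq_zero_of_differentiableAt (differentiableAt_one_div_four_mul hq),
    wirtingerBar_ofReal_accProfile_norm_sq hq hL, zero_mul, zero_add]
  push_cast
  field_simp

theorem wpDensity_inv_mul {q : ℂ} (hq : q ≠ 0) (hL : Lmod q ≠ 0) :
    (wpDensity q)⁻¹ * ((π ^ 2 / (4 * ‖q‖ ^ 2 * Lmod q ^ 3) : ℝ) : ℂ) =
      1 / (2 * π * Complex.I) := by
  have hq' : (‖q‖ : ℂ) ≠ 0 := by simpa using hq
  have hL' : (Lmod q : ℂ) ≠ 0 := by exact_mod_cast hL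
  rw [wpDensity]
  push_cast
  field_simp
  ring

/-- On the punctured unit disc, the accessory parameter `C` is real-differentiable,
its Wirtinger derivative is `∂̄C(q) = π²/(4|q|² L(q)³)`, and consequently the
Poisson bracket `{q, C} = ρ(q)⁻¹ ∂̄C(q)` with respect to `ω = ρ dq ∧ dq̄`
equals `1/(2πi)`. -/
theorem accessory_poisson_bracket :
    ∀ q : ℂ, 0 < ‖q‖ → ‖q‖ < 1 →
      DifferentiableAt ℝ accC q ∧
      wirtingerBar accC q =
        ((π ^ 2 / (4 * ‖q‖ ^ 2 * Lmod q ^ 3) : ℝ) : ℂ) ∧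
      (wpDensity q)⁻¹ * wirtingerBar accC q = 1 / (2 * π * Complex.I) := by
  intro q hq0 hq1
  have hq : q ≠ 0 := norm_pos_iff.mp hq0
  have hL : Lmod q ≠ 0 := (Real.log_pos (one_lt_one_div hq0 hq1)).ne'
  refine ⟨differentiableAt_accC hq hL, wirtingerBar_accC hq hL, ?_⟩
  rw [wirtingerBar_accC hq hL, wpDensity_inv_mul hq hL]
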